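/- In a directed acyclic graph D with m edges, any circulation f with f(e) ≥ −δ for all edges e satisfies f(e) ≤ δ·m for every edge e. -/

import Mathlib

/-!
Let `U` be the set of vertices reachable from the head of `e₀`. No edge leaves `U`, and by
acyclicity the tail of `e₀` lies outside `U`, so `e₀` enters `U`. Conservation summed over `U`
says that the net flow into `U` vanishes; as no edge leaves `U`, the flows on the edges entering
`U` sum to zero. Hence `f e₀` is minus the sum of at most `m - 1` other values, each at most `δ`.
-/

open Finset

theorem Finset.le_card_sub_one_nsmul_of_sum_eq_zero {ι M : Type*} [AddCommGroup M] [LinearOrder M]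
    [IsOrderedAddMonoid M] {C : Finset ι} {f : ι → M} {δ : M} {i : ι} (hi : i ∈ C)
    (hsum : ∑ j ∈ C, f j = 0) (hlow : ∀ j ∈ C, -δ ≤ f j) :
    f i ≤ (#C - 1) • δ := by
  classical
  have hfi : f i = ∑ j ∈ C.erase i, -f j := by
    rw [← add_sum_erase C f hi] at hsum
    rw [sum_neg_distrib]
    exact eq_neg_of_add_eq_zero_left hsum
  rw [hfi, ← card_erase_of_mem hi]
  exact sum_le_card_nsmul _ _ _ fun j hj => neg_le.mp (hlow j (mem_of_mem_erase hj))

section Circulation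

variable {V E M : Type*} [Fintype E] [DecidableEq V] (s t : E → V)

def IsCirculation [AddCommMonoid M] (f : E → M) : Prop :=
  ∀ v, ∑ e with t e = v, f e = ∑ e with s e = v, f e

def IsForwardClosed (U : Finset V) : Prop :=
  ∀ e, s e ∈ U → t e ∈ U

variable {s t}

theorem IsCirculation.sum_target_mem_eq_sum_source_mem [AddCommMonoid M] {f : E → M}
    (hf : IsCirculation s t f) (U : Finset V) :
    ∑ e with t e ∈ U, f e = ∑ e with s e ∈ U, f e := by
  rw [← sum_fiberwise_eq_sum_filter, ← sum_fiberwise_eq_sum_filter]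
  exact sum_congr rfl fun v _ => hf v

theorem IsCirculation.sum_entering_eq_zero [AddCommGroup M] {f : E → M}
    (hf : IsCirculation s t f) {U : Finset V} (hU : IsForwardClosed s t U) :
    ∑ e with t e ∈ U ∧ s e ∉ U, f e = 0 := by
  have hsplit := sum_filter_add_sum_filter_not {e | t e ∈ U} (fun e => s e ∈ U) f
  simp only [filter_filter] at hsplit
  have hsource :
      univ.filter (fun e => t e ∈ U ∧ s e ∈ U) = univ.filter (fun e => s e ∈ U) :=
    filter_congr fun e _ => ⟨And.right, fun h => ⟨hU e h, h⟩⟩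
  rw [hsource, hf.sum_target_mem_eq_sum_source_mem U] at hsplit
  exact add_eq_left.mp hsplit

theorem exists_isForwardClosed_of_not_reflTransGen {a b : V}
    (hab : ¬ Relation.ReflTransGen (fun u v => ∃ e, s e = u ∧ t e = v) a b) :
    ∃ U : Finset V, IsForwardClosed s t U ∧ a ∈ U ∧ b ∉ U := by
  classical
  -- every vertex reachable from `a` is `a` itself or the head of an edge
  refine ⟨{v ∈ insert a (univ.image t) |
    Relation.ReflTransGen (fun u v => ∃ e, s e = u ∧ t e = v) a v}, ?_, ?_, ?_⟩
  · intro e he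
    simp only [mem_filter] at he ⊢
    exact ⟨mem_insert_of_mem (mem_image_of_mem t (mem_univ e)), he.2.tail ⟨e, rfl, rfl⟩⟩
  · exact mem_filter.mpr ⟨mem_insert_self _ _, .refl⟩
  · simp [hab]

end Circulation

theorem stmt_7_general {V E : Type*} [Fintype E] [DecidableEq V]
    (s t : E → V) (f : E → ℝ) (δ : ℝ) (hδ : 0 ≤ δ)
    (hacyclic : ∀ e : E,
      ¬ Relation.ReflTransGen (fun a b => ∃ e', s e' = a ∧ t e' = b) (t e) (s e))
    (hcirc : ∀ v : V, (∑ e, if t e = v then f e else 0) = ∑ e, if s e = v then f e else 0)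
    (hlow : ∀ e, -δ ≤ f e) :
    ∀ e, f e ≤ δ * (Fintype.card E : ℝ) := by
  intro e₀
  have hf : IsCirculation s t f := fun v => by simpa only [sum_filter] using hcirc v
  obtain ⟨U, hU, hhead, htail⟩ := exists_isForwardClosed_of_not_reflTransGen (hacyclic e₀)
  have hbound := le_card_sub_one_nsmul_of_sum_eq_zero (i := e₀) (by simp [hhead, htail])
    (hf.sum_entering_eq_zero hU) fun e _ => hlow e
  have hcard : #{e ∈ univ | t e ∈ U ∧ s e ∉ U} - 1 ≤ Fintype.card E :=
    (Nat.sub_le _ _).trans (card_le_univ _)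
  calc f e₀ ≤ (#{e ∈ univ | t e ∈ U ∧ s e ∉ U} - 1 : ℕ) * δ := by
        rwa [nsmul_eq_mul] at hbound
    _ ≤ Fintype.card E * δ := by gcongr
    _ = δ * Fintype.card E := mul_comm _ _

/-- In a directed acyclic graph with `m` edges (acyclicity: no edge closes a directed
cycle), any circulation `f` with `f(e) ≥ −δ` on every edge satisfies `f(e) ≤ δ·m`. -/
theorem stmt_7 {V E : Type*} [Fintype V] [Fintype E] [DecidableEq V]
    (s t : E → V) (f : E → ℝ) (δ : ℝ) (hδ : 0 ≤ δ)
    (hacyclic : ∀ e : E,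
      ¬ Relation.ReflTransGen (fun a b => ∃ e', s e' = a ∧ t e' = b) (t e) (s e))
    (hcirc : ∀ v : V, (∑ e, if t e = v then f e else 0) = ∑ e, if s e = v then f e else 0)
    (hlow : ∀ e, -δ ≤ f e) :
    ∀ e, f e ≤ δ * (Fintype.card E : ℝ) :=
  stmt_7_general s t f δ hδ hacyclic hcirc hlow
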